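/- Let n, m ≥ 3 with n ≠ 4 and m ≠ 4. The commutator (derived) subgroup of W = S_n ≀ S_m equals the subgroup A_n ≀ Ã_m = {(f, σ) : sign σ = 1 and ∏ i, sign (f i) = 1}. -/

import Mathlib

/-- The automorphism of `Fin n → G` permuting coordinates by `σ`:
`(σ • f) i = f (σ⁻¹ i)`. -/
def permAut {n : ℕ} {G : Type*} [Group G] (σ : Equiv.Perm (Fin n)) :
    MulAut (Fin n → G) where
  toFun f i := f (σ⁻¹ i)
  invFun f i := f (σ i)
  left_inv f := funext fun i => by simp
  right_inv f := funext fun i => by simp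
  map_mul' f g := rfl

/-- The action of `Equiv.Perm (Fin n)` on `Fin n → G` by permuting coordinates,
as a homomorphism into the automorphism group. -/
def permHom (n : ℕ) (G : Type*) [Group G] :
    Equiv.Perm (Fin n) →* MulAut (Fin n → G) where
  toFun := permAut
  map_one' := rfl
  map_mul' _ _ := rfl

/-- The permutational wreath product `S_n ≀ S_m`, realized as the semidirect
product `(Fin n → Equiv.Perm (Fin m)) ⋊ Equiv.Perm (Fin n)`. -/
abbrev W (n m : ℕ) : Type :=
  SemidirectProduct (Fin n → Equiv.Perm (Fin m)) (Equiv.Perm (Fin n))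
    (permHom n (Equiv.Perm (Fin m)))

/-!
The pair `(sign σ, ∏ i, sign (f i))` is a homomorphism from `W` to an abelian group, so it kills
the commutator subgroup. Conversely, work in the abelianization of `W`. Conjugating by the top
group moves a permutation placed in one coordinate to any other coordinate, so the image of
`(f, σ)` is `∏ i, ψ (f i)` times the image of `σ`, for a single homomorphism `ψ` from `S_m`. Even
permutations are products of three-cycles, and a three-cycle is a commutator because it is
conjugate to its square; hence `ψ` and the image of the top group factor through the sign.
-/

open Equiv Equiv.Perm SemidirectProduct

theorem alternatingGroup_le_commutator (α : Type*) [Fintype α] [DecidableEq α] :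
    alternatingGroup α ≤ commutator (Perm α) := by
  rw [← closure_three_cycles_eq_alternating, Subgroup.closure_le, commutator_eq_closure]
  intro c hc
  refine Subgroup.subset_closure (mem_commutatorSet_of_isConj_sq _ ?_)
  rw [isConj_iff_cycleType_eq, sq, hc.isThreeCycle_sq, hc]

theorem MonoidHom.prod_map_eq_one_of_ker_le {G C A ι : Type*} [Group G] [CommGroup C]
    [CommGroup A] [Fintype ι] {χ : G →* C} {ψ : G →* A} (hker : χ.ker ≤ ψ.ker) {f : ι → G}
    (hf : ∏ i, χ (f i) = 1) : ∏ i, ψ (f i) = 1 := by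
  have hprod : (Finset.univ.toList.map f).prod ∈ χ.ker := by
    rwa [MonoidHom.mem_ker, map_list_prod, List.map_map, Finset.prod_map_toList]
  simpa only [MonoidHom.mem_ker, map_list_prod, List.map_map, Finset.prod_map_toList,
    Function.comp_def] using hker hprod

theorem permHom_mulSingle {n : ℕ} {G : Type*} [Group G] (σ : Perm (Fin n)) (i : Fin n)
    (x : G) : permHom n G σ (Pi.mulSingle i x) = Pi.mulSingle (σ i) x :=
  Pi.mulSingle_comp_equiv σ⁻¹ i x

namespace W

variable {n m : ℕ}

def signPair (n m : ℕ) : W n m →* ℤˣ × ℤˣ where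
  toFun w := (sign w.right, ∏ i, sign (w.left i))
  map_one' := by simp
  map_mul' a b := by
    refine Prod.ext (map_mul _ _ _) ?_
    simp only [mul_left, Pi.mul_apply, map_mul, Finset.prod_mul_distrib]
    congr 1
    exact Equiv.prod_comp a.right⁻¹ fun i => sign (b.left i)

theorem of_inl_mulSingle_eq (i j : Fin n) (τ : Perm (Fin m)) :
    Abelianization.of (inl (Pi.mulSingle i τ) : W n m) =
      Abelianization.of (inl (Pi.mulSingle j τ) : W n m) := by
  rw [← swap_apply_left i j, ← permHom_mulSingle, inl_aut]
  simp only [map_mul, map_inv, mul_inv_cancel_comm]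

theorem of_inl_eq_prod (f : Fin n → Perm (Fin m)) :
    Abelianization.of (inl f : W n m) =
      ∏ i, Abelianization.of (inl (Pi.mulSingle i (f i)) : W n m) := by
  have h := Finset.univ.map_noncommProd (fun i => Pi.mulSingle i (f i))
    (fun i _ j _ _ => Pi.mulSingle_apply_commute f i j)
    ((Abelianization.of (G := W n m)).comp inl)
  rwa [Finset.noncommProd_mulSingle, Finset.noncommProd_eq_prod] at h

theorem of_inl_eq_one {f : Fin n → Perm (Fin m)} (hf : ∏ i, sign (f i) = 1) :
    Abelianization.of (inl f : W n m) = 1 := by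
  rcases isEmpty_or_nonempty (Fin n) with hn | hn
  · simp [Subsingleton.elim f 1]
  obtain ⟨i₀⟩ := hn
  let ψ : Perm (Fin m) →* Abelianization (W n m) :=
    Abelianization.of.comp (inl.comp (MonoidHom.mulSingle (fun _ => Perm (Fin m)) i₀))
  have hker : sign.ker ≤ ψ.ker :=
    (alternatingGroup_le_commutator _).trans (Abelianization.commutator_subset_ker ψ)
  rw [of_inl_eq_prod]
  simp_rw [of_inl_mulSingle_eq _ i₀]
  exact MonoidHom.prod_map_eq_one_of_ker_le hker hf

theorem of_inr_eq_one {σ : Perm (Fin n)} (hσ : sign σ = 1) :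
    Abelianization.of (inr σ : W n m) = 1 :=
  ((alternatingGroup_le_commutator _).trans
    (Abelianization.commutator_subset_ker (Abelianization.of.comp inr))) hσ

theorem commutator_eq_ker_signPair : commutator (W n m) = (signPair n m).ker := by
  refine le_antisymm (Abelianization.commutator_subset_ker _) fun w hw => ?_
  have hw : sign w.right = 1 ∧ ∏ i, sign (w.left i) = 1 := Prod.ext_iff.1 hw
  rw [← Abelianization.ker_of, MonoidHom.mem_ker, ← inl_left_mul_inr_right w, map_mul,
    of_inl_eq_one hw.2, of_inr_eq_one hw.1, mul_one]

end W

theorem stmt11_general (n m : ℕ) :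
    (commutator (W n m) : Set (W n m)) =
      {w : W n m | Equiv.Perm.sign w.right = 1 ∧
        ∏ i, Equiv.Perm.sign (w.left i) = 1} := by
  rw [W.commutator_eq_ker_signPair]
  ext w
  exact Prod.ext_iff

/-- The commutator subgroup of `W = S_n ≀ S_m` equals `A_n ≀ Ã_m`. -/
theorem stmt11 (n m : ℕ) (hn : 3 ≤ n) (hm : 3 ≤ m) (hn4 : n ≠ 4) (hm4 : m ≠ 4) :
    (commutator (W n m) : Set (W n m)) =
      {w : W n m | Equiv.Perm.sign w.right = 1 ∧
        ∏ i, Equiv.Perm.sign (w.left i) = 1} :=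
  stmt11_general n m
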